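/- Let t₀ ∈ (0, Δ). Then the one-sided limits of t₁ ↦ J_1(t₀, t₁) at t₁ = Δ − t₀ exist, and (limit from below) − (limit from above) = a · λ²·(Δ − t₀)·exp(−λ·(Δ − t₀)) · λ²·t₀·exp(−λ·t₀), which is strictly positive. Thus the joint density of two consecutive interspike intervals has a jump across the line t₀ + t₁ = Δ. -/

import Mathlib

open Real Set Filter MeasureTheory

/-- Conditional ISI density `F t s` given time-to-live `s` of the feedback impulse. -/
noncomputable def F (lam τ t s : ℝ) : ℝ :=
  if 0 < t ∧ t < s then lam ^ 2 * t * Real.exp (-lam * t)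
  else if s ≤ t ∧ t ≤ s + τ then
    (1 + lam * s) * Real.exp (-lam * s) * (lam ^ 2 * (t - s) * Real.exp (-lam * (t - s)))
  else 0

/-- Regular part of the stationary time-to-live density. -/
noncomputable def g (lam A B s : ℝ) : ℝ := A + B * Real.exp (2 * lam * s)

/-- Weight of the singular (Dirac) part of the stationary time-to-live distribution. -/
noncomputable def aC (lam Δ : ℝ) : ℝ :=
  4 * Real.exp (2 * lam * Δ) / ((3 + 2 * lam * Δ) * Real.exp (2 * lam * Δ) + 1)

/-- `T t p q = Σ_{j=p}^{q-1} t_j` (empty sums are `0`). -/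
def T {n : ℕ} (t : Fin n → ℝ) (p q : ℕ) : ℝ :=
  ∑ j : Fin n, if p ≤ (j : ℕ) ∧ (j : ℕ) < q then t j else 0

/-- `Ilow lam Δ τ A B i t` is the term `I_i`, `0 ≤ i ≤ m-1`, of the joint ISI density. -/
noncomputable def Ilow (lam Δ τ A B : ℝ) {m : ℕ} (i : ℕ) (t : Fin (m + 1) → ℝ) : ℝ :=
  (∏ k : Fin (m + 1), if i + 1 ≤ (k : ℕ) then F lam τ (t k) (Δ - T t (i + 1) (k : ℕ)) else 1) *
    ∫ s in T t 0 i..T t 0 (i + 1),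
      g lam A B s *
        ∏ k : Fin (m + 1), if (k : ℕ) ≤ i then F lam τ (t k) (s - T t 0 (k : ℕ)) else 1

/-- `Itop lam Δ τ A B t` is the term `I_m` of the joint ISI density. -/
noncomputable def Itop (lam Δ τ A B : ℝ) {m : ℕ} (t : Fin (m + 1) → ℝ) : ℝ :=
  (∫ s in T t 0 m..Δ, g lam A B s * ∏ k : Fin (m + 1), F lam τ (t k) (s - T t 0 (k : ℕ)))
    + aC lam Δ * ∏ k : Fin (m + 1), F lam τ (t k) (Δ - T t 0 (k : ℕ))

/-- `J lam Δ τ A B t = Σ_{i=0}^{m} I_i(t)`, the joint density of `m+1` consecutive ISIs. -/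
noncomputable def J (lam Δ τ A B : ℝ) {m : ℕ} (t : Fin (m + 1) → ℝ) : ℝ :=
  (∑ i ∈ Finset.range m, Ilow lam Δ τ A B i t) + Itop lam Δ τ A B t

/-- Joint density of two consecutive ISIs (valid for `0 < t₀ < Δ`, `0 < t₁ < τ`). -/
noncomputable def J1 (lam Δ τ A B t₀ t₁ : ℝ) : ℝ :=
  F lam τ t₁ Δ * (∫ s in (0 : ℝ)..t₀, g lam A B s * F lam τ t₀ s)
    + (∫ s in t₀..Δ, F lam τ t₁ (s - t₀) * F lam τ t₀ s * g lam A B s)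
    + aC lam Δ * F lam τ t₁ (Δ - t₀) * F lam τ t₀ Δ

/-! The only term of `J1` that is discontinuous in `t₁` at `Δ - t₀` is the atomic term
`a · F(t₁, Δ - t₀) · F(t₀, Δ)`: as `t₁` crosses the time-to-live `Δ - t₀`, `F(t₁, Δ - t₀)` drops
from `λ²t₁e^{-λt₁}` to `0`. The other two terms are continuous there, the integral one by dominated
convergence with `0 ≤ F ≤ λ`. -/

open Topology

section ISIDensity

variable {lam τ A B : ℝ}

lemma F_of_lt {t s : ℝ} (ht : 0 < t) (hts : t < s) :
    F lam τ t s = lam ^ 2 * t * exp (-lam * t) := by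
  rw [F, if_pos ⟨ht, hts⟩]

lemma F_of_le_of_le {t s : ℝ} (hst : s ≤ t) (hts : t ≤ s + τ) :
    F lam τ t s = (1 + lam * s) * exp (-lam * s) * (lam ^ 2 * (t - s) * exp (-lam * (t - s))) := by
  rw [F, if_neg fun h => h.2.not_ge hst, if_pos ⟨hst, hts⟩]

lemma measurable_F (t : ℝ) : Measurable (F lam τ t) := by
  refine Measurable.ite ?_ measurable_const (Measurable.ite ?_ (by fun_prop) measurable_const)
  · by_cases ht : 0 < t
    · simp only [ht, true_and]; exact measurableSet_Ioi
    · simp [ht]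
  · exact (measurableSet_le measurable_id measurable_const).inter
      (measurableSet_le measurable_const (measurable_id.add_const _))

lemma F_nonneg (hlam : 0 ≤ lam) {t s : ℝ} (hs : 0 ≤ s) : 0 ≤ F lam τ t s := by
  unfold F
  split_ifs with h₁ h₂
  · have := h₁.1; positivity
  · have := sub_nonneg.2 h₂.1; positivity
  · rfl

lemma F_le (hlam : 0 ≤ lam) (t s : ℝ) : F lam τ t s ≤ lam := by
  have hxexp (x : ℝ) : x * exp (-x) ≤ 1 :=
    (mul_exp_neg_le_exp_neg_one x).trans (exp_le_one_iff.2 (by norm_num))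
  have hbranch (x : ℝ) : lam ^ 2 * x * exp (-lam * x) ≤ lam := by
    have := mul_le_mul_of_nonneg_left (hxexp (lam * x)) hlam
    rw [neg_mul]; nlinarith
  unfold F
  split_ifs with h₁ h₂
  · exact hbranch t
  · have hsurv : (1 + lam * s) * exp (-lam * s) ≤ 1 :=
      calc (1 + lam * s) * exp (-lam * s) ≤ exp (lam * s) * exp (-lam * s) := by
            gcongr; linarith [add_one_le_exp (lam * s)]
        _ = 1 := by rw [← exp_add]; simp
    have := sub_nonneg.2 h₂.1
    have : 0 ≤ lam ^ 2 * (t - s) * exp (-lam * (t - s)) := by positivity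
    nlinarith [hbranch (t - s)]
  · exact hlam

lemma abs_F_le (hlam : 0 ≤ lam) {t s : ℝ} (hs : 0 ≤ s) : |F lam τ t s| ≤ lam := by
  rw [abs_of_nonneg (F_nonneg hlam hs)]
  exact F_le hlam t s

lemma continuousAt_F_of_lt {u x : ℝ} (hx : 0 < x) (hxu : x < u) :
    ContinuousAt (fun t => F lam τ t u) x := by
  refine ContinuousAt.congr (f := fun t => lam ^ 2 * t * exp (-lam * t)) (by fun_prop) ?_
  filter_upwards [Ioo_mem_nhds hx hxu] with t ht
  exact (F_of_lt ht.1 ht.2).symm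

lemma continuousAt_F_of_gt {u x : ℝ} (hux : u < x) (hxu : x < u + τ) :
    ContinuousAt (fun t => F lam τ t u) x := by
  refine ContinuousAt.congr (f := fun t => (1 + lam * u) * exp (-lam * u) *
    (lam ^ 2 * (t - u) * exp (-lam * (t - u)))) (by fun_prop) ?_
  filter_upwards [Ioo_mem_nhds hux hxu] with t ht
  exact (F_of_le_of_le ht.1.le ht.2.le).symm

lemma tendsto_F_nhdsLT {u : ℝ} (hu : 0 < u) :
    Tendsto (fun t => F lam τ t u) (𝓝[<] u) (𝓝 (lam ^ 2 * u * exp (-lam * u))) := by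
  have hlim : Tendsto (fun t => lam ^ 2 * t * exp (-lam * t)) (𝓝[<] u)
      (𝓝 (lam ^ 2 * u * exp (-lam * u))) :=
    ((by fun_prop : Continuous fun t => lam ^ 2 * t * exp (-lam * t)).tendsto u).mono_left
      nhdsWithin_le_nhds
  refine hlim.congr' ?_
  filter_upwards [Ioo_mem_nhdsLT hu] with t ht
  exact (F_of_lt ht.1 ht.2).symm

lemma tendsto_F_nhdsGT (hτ : 0 < τ) (u : ℝ) :
    Tendsto (fun t => F lam τ t u) (𝓝[>] u) (𝓝 0) := by
  have hlim : Tendsto (fun t => (1 + lam * u) * exp (-lam * u) *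
      (lam ^ 2 * (t - u) * exp (-lam * (t - u)))) (𝓝[>] u) (𝓝 0) := by
    have := ((by fun_prop : Continuous fun t => (1 + lam * u) * exp (-lam * u) *
      (lam ^ 2 * (t - u) * exp (-lam * (t - u)))).tendsto u).mono_left
      (nhdsWithin_le_nhds (s := Ioi u))
    simpa using this
  refine hlim.congr' ?_
  filter_upwards [Ioo_mem_nhdsGT (show u < u + τ by linarith)] with t ht
  exact (F_of_le_of_le ht.1.le ht.2.le).symm

lemma continuousAt_integral_F_mul_F_mul_g (hlam : 0 ≤ lam) {t₀ Δ x : ℝ} (ht₀ : 0 ≤ t₀)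
    (ht₀Δ : t₀ ≤ Δ) (hx : Δ - t₀ ≤ x) (hxτ : x < τ) :
    ContinuousAt (fun t₁ => ∫ s in t₀..Δ, F lam τ t₁ (s - t₀) * F lam τ t₀ s * g lam A B s) x := by
  refine intervalIntegral.continuousAt_of_dominated_interval
    (bound := fun s => lam * lam * |g lam A B s|) ?_ ?_ ?_ ?_
  · refine Eventually.of_forall fun t₁ => ?_
    exact (((measurable_F t₁).comp (measurable_id.sub_const t₀)).mul (measurable_F t₀) |>.mul
      (by unfold g; fun_prop)).aestronglyMeasurable
  · refine Eventually.of_forall fun t₁ => Eventually.of_forall fun s hs => ?_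
    rw [uIoc_of_le ht₀Δ] at hs
    rw [norm_mul, norm_mul, Real.norm_eq_abs, Real.norm_eq_abs, Real.norm_eq_abs]
    gcongr
    · exact abs_F_le hlam (by linarith [hs.1])
    · exact abs_F_le hlam (by linarith [hs.1])
  · exact (by unfold g; fun_prop : Continuous fun s => lam * lam * |g lam A B s|).intervalIntegrable _ _
  · have hne : ∀ᵐ s : ℝ, s ≠ Δ := by simp [ae_iff]
    filter_upwards [hne] with s hsΔ hs
    rw [uIoc_of_le ht₀Δ] at hs
    have hslt : s < Δ := lt_of_le_of_ne hs.2 hsΔ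
    exact ((continuousAt_F_of_gt (by linarith) (by linarith [hs.1])).mul continuousAt_const).mul
      continuousAt_const

lemma aC_pos {Δ : ℝ} (h : 0 ≤ lam * Δ) : 0 < aC lam Δ := by
  unfold aC
  have := exp_pos (2 * lam * Δ)
  apply div_pos (by positivity)
  nlinarith

end ISIDensity

theorem stmt16_general (lam Δ τ A B : ℝ) (hlam : 0 < lam) (hΔτ : Δ < τ)
    (t₀ : ℝ) (ht₀ : t₀ ∈ Set.Ioo (0 : ℝ) Δ) :
    ∃ L₁ L₂ : ℝ,
      Filter.Tendsto (fun t₁ => J1 lam Δ τ A B t₀ t₁)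
        (nhdsWithin (Δ - t₀) (Set.Iio (Δ - t₀))) (nhds L₁) ∧
      Filter.Tendsto (fun t₁ => J1 lam Δ τ A B t₀ t₁)
        (nhdsWithin (Δ - t₀) (Set.Ioi (Δ - t₀))) (nhds L₂) ∧
      L₁ - L₂ =
        aC lam Δ * (lam ^ 2 * (Δ - t₀) * Real.exp (-lam * (Δ - t₀))) *
          (lam ^ 2 * t₀ * Real.exp (-lam * t₀)) ∧
      0 < L₁ - L₂ := by
  obtain ⟨ht₀, ht₀Δ⟩ := ht₀
  set u := Δ - t₀
  have hu₀ : 0 < u := sub_pos.2 ht₀Δ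
  set R : ℝ → ℝ := fun t₁ => F lam τ t₁ Δ * (∫ s in (0 : ℝ)..t₀, g lam A B s * F lam τ t₀ s)
    + ∫ s in t₀..Δ, F lam τ t₁ (s - t₀) * F lam τ t₀ s * g lam A B s
  have hR : Tendsto R (𝓝 u) (𝓝 (R u)) :=
    (((continuousAt_F_of_lt hu₀ (by linarith)).mul continuousAt_const).add
      (continuousAt_integral_F_mul_F_mul_g hlam.le ht₀.le ht₀Δ.le le_rfl (by linarith))).tendsto
  have hgap : R u + aC lam Δ * (lam ^ 2 * u * exp (-lam * u)) * F lam τ t₀ Δ - R u =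
      aC lam Δ * (lam ^ 2 * u * exp (-lam * u)) * (lam ^ 2 * t₀ * exp (-lam * t₀)) := by
    rw [F_of_lt ht₀ ht₀Δ]; ring
  have hatomL : Tendsto (fun t₁ => aC lam Δ * F lam τ t₁ u * F lam τ t₀ Δ) (𝓝[<] u)
      (𝓝 (aC lam Δ * (lam ^ 2 * u * exp (-lam * u)) * F lam τ t₀ Δ)) :=
    ((tendsto_F_nhdsLT hu₀).const_mul _).mul_const _
  have hatomR : Tendsto (fun t₁ => aC lam Δ * F lam τ t₁ u * F lam τ t₀ Δ) (𝓝[>] u) (𝓝 0) := by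
    simpa only [mul_zero, zero_mul] using
      ((tendsto_F_nhdsGT (ht₀.trans ht₀Δ |>.trans hΔτ) u).const_mul _).mul_const _
  refine ⟨_, R u, (hR.mono_left nhdsWithin_le_nhds).add hatomL, ?_, hgap, ?_⟩
  · exact add_zero (R u) ▸ (hR.mono_left nhdsWithin_le_nhds).add hatomR
  · rw [hgap]
    have := aC_pos (mul_nonneg hlam.le (ht₀.trans ht₀Δ).le)
    positivity

/-- for `t₀ ∈ (0, Δ)`, the map `t₁ ↦ J1(t₀,t₁)` has one-sided limits at
`t₁ = Δ − t₀` and (left limit) − (right limit)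
`= a · λ²(Δ−t₀)e^{−λ(Δ−t₀)} · λ²t₀e^{−λt₀} > 0`. -/
theorem stmt16 (lam Δ τ A B : ℝ) (hlam : 0 < lam) (hΔ : 0 < Δ) (hΔτ : Δ < τ)
    (t₀ : ℝ) (ht₀ : t₀ ∈ Set.Ioo (0 : ℝ) Δ) :
    ∃ L₁ L₂ : ℝ,
      Filter.Tendsto (fun t₁ => J1 lam Δ τ A B t₀ t₁)
        (nhdsWithin (Δ - t₀) (Set.Iio (Δ - t₀))) (nhds L₁) ∧
      Filter.Tendsto (fun t₁ => J1 lam Δ τ A B t₀ t₁)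
        (nhdsWithin (Δ - t₀) (Set.Ioi (Δ - t₀))) (nhds L₂) ∧
      L₁ - L₂ =
        aC lam Δ * (lam ^ 2 * (Δ - t₀) * Real.exp (-lam * (Δ - t₀))) *
          (lam ^ 2 * t₀ * Real.exp (-lam * t₀)) ∧
      0 < L₁ - L₂ :=
  stmt16_general lam Δ τ A B hlam hΔτ t₀ ht₀
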